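/- Let X be a real Banach space, let A, B : X →L[ℝ] X be bounded linear operators that commute (A ∘ B = B ∘ A), and let τ > 0. Then τ·φ₁(τ·(A+B)) − τ·exp((τ/2)·A) ∘ φ₁(τ·B) = −∫_{s∈[0,τ]} ∫_{ξ∈[0,s]} (τ/2 − s) · exp(τ·A) ∘ exp((τ−ξ)·B) ∘ B ∘ A dξ ds − ∫_{s∈[0,τ]} ∫_{σ∈[s,τ/2]} ∫_{ξ∈[0,σ]} exp((τ−s)·B) ∘ exp((τ−ξ)·A) ∘ A ∘ A dξ dσ ds, where the inner integral over σ from s to τ/2 is an oriented (interval) integral. -/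

import Mathlib

/-!
Since `d/dξ exp ((c - ξ) • T) = -exp ((c - ξ) • T) * T`, every innermost integral is a difference
of exponentials, and the `σ`-integral becomes
`(τ/2 - s) • exp (τ • A) * A - (exp ((τ - s) • A) - exp ((τ/2) • A))` up to the factor
`exp ((τ - s) • B)`. As `A` and `B` commute, the terms weighted by `τ/2 - s` in the two remainders
combine into `(τ/2 - s) • exp (τ • A) * exp (τ • B) * A`, which integrates to zero over `[0, τ]`,
and `exp ((τ - s) • B) * exp ((τ - s) • A) = exp ((τ - s) • (A + B))`. What remains is
`∫₀^τ exp (s • (A + B)) - exp ((τ/2) • A) * ∫₀^τ exp (s • B)`, and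
`∫₀^τ exp (s • T) = τ • φ₁(τ • T)` by integrating the exponential series termwise.
-/

open MeasureTheory intervalIntegral
open scoped Nat

/-- The operator `φ_ℓ(T) = ∑_{k=0}^∞ T^k / (ℓ+k)!` (for `ℓ = 0` this is `exp T`). -/
noncomputable def phi {X : Type*} [NormedAddCommGroup X] [NormedSpace ℝ X] [CompleteSpace X]
    (ℓ : ℕ) (T : X →L[ℝ] X) : X →L[ℝ] X :=
  ∑' k : ℕ, (((ℓ + k)! : ℝ)⁻¹) • T ^ k

open NormedSpace

section
variable {𝔸 : Type*} [NormedRing 𝔸] [NormedAlgebra ℝ 𝔸]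

theorem norm_smul_smul_pow_le_of_abs_le (c : ℝ) (T : 𝔸) {s τ : ℝ} (h : |s| ≤ |τ|) (k : ℕ) :
    ‖c • (s • T) ^ k‖ ≤ ‖c • (τ • T) ^ k‖ := by
  simp only [smul_pow, smul_smul, norm_smul, norm_mul, norm_pow, Real.norm_eq_abs]
  gcongr

theorem integral_exp_sub_smul (T : 𝔸) (τ : ℝ) :
    ∫ s in (0:ℝ)..τ, exp ((τ - s) • T) = ∫ s in (0:ℝ)..τ, exp (s • T) := by
  simpa using integral_comp_sub_left (a := 0) (b := τ) (fun u => exp (u • T)) τ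

variable [CompleteSpace 𝔸]

theorem integral_inv_factorial_smul_smul_pow (T : 𝔸) (τ : ℝ) (k : ℕ) :
    ∫ s in (0:ℝ)..τ, (k ! : ℝ)⁻¹ • (s • T) ^ k = τ • (((1 + k)! : ℝ)⁻¹ • (τ • T) ^ k) := by
  simp only [smul_pow, smul_smul]
  rw [intervalIntegral.integral_smul_const, intervalIntegral.integral_const_mul, integral_pow]
  congr 1
  rw [add_comm 1 k, Nat.factorial_succ]
  push_cast
  field_simp
  ring

theorem hasSum_integral_exp_smul (T : 𝔸) (τ : ℝ) :
    HasSum (fun k : ℕ => τ • (((1 + k)! : ℝ)⁻¹ • (τ • T) ^ k))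
      (∫ s in (0:ℝ)..τ, exp (s • T)) := by
  simp only [← integral_inv_factorial_smul_smul_pow]
  refine hasSum_integral_of_dominated_convergence (F := fun k s => (k ! : ℝ)⁻¹ • (s • T) ^ k)
    (fun k _ => ‖(k ! : ℝ)⁻¹ • (τ • T) ^ k‖) (fun k => by fun_prop) (fun k => ?_)
    (.of_forall fun _ _ => norm_expSeries_summable' _) intervalIntegrable_const
    (.of_forall fun s _ => exp_series_hasSum_exp' (s • T))
  exact .of_forall fun s hs => norm_smul_smul_pow_le_of_abs_le _ T
    (by simpa using Set.abs_sub_left_of_mem_uIcc (Set.uIoc_subset_uIcc hs)) k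

theorem continuous_exp_sub_smul (T : 𝔸) (c : ℝ) : Continuous fun s : ℝ => exp ((c - s) • T) :=
  (differentiable_exp_smul_const ℝ T).continuous.comp (continuous_const.sub continuous_id)

theorem hasDerivAt_exp_sub_smul (T : 𝔸) (c t : ℝ) :
    HasDerivAt (fun u : ℝ => exp ((c - u) • T)) (-(exp ((c - t) • T) * T)) t := by
  simpa [Function.comp_def] using
    (hasDerivAt_exp_smul_const T (c - t)).scomp t ((hasDerivAt_id t).const_sub c)

theorem integral_mul_exp_sub_smul_mul_mul (D T C : 𝔸) (c a b : ℝ) :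
    ∫ ξ in a..b, D * exp ((c - ξ) • T) * T * C =
      D * exp ((c - a) • T) * C - D * exp ((c - b) • T) * C := by
  have hderiv (t : ℝ) : HasDerivAt (fun u : ℝ => -(D * exp ((c - u) • T) * C))
      (D * exp ((c - t) • T) * T * C) t := by
    simpa [mul_assoc, Pi.neg_def] using
      (((hasDerivAt_exp_sub_smul T c t).const_mul D).mul_const C).neg
  have hcont := continuous_exp_sub_smul T c
  rw [integral_eq_sub_of_hasDerivAt (fun t _ => hderiv t)
    (Continuous.intervalIntegrable (by fun_prop) a b)]
  abel

theorem integral_mul_exp_sub_smul_mul (D T : 𝔸) (c a b : ℝ) :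
    ∫ ξ in a..b, D * exp ((c - ξ) • T) * T = D * exp ((c - a) • T) - D * exp ((c - b) • T) := by
  simpa using integral_mul_exp_sub_smul_mul_mul D T 1 c a b

theorem integral_integral_mul_exp_sub_smul_mul_mul_self (D T : 𝔸) (c a b : ℝ) :
    ∫ σ in a..b, ∫ ξ in (0:ℝ)..σ, D * (exp ((c - ξ) • T) * (T * T)) =
      (b - a) • (D * exp (c • T) * T) - (D * exp ((c - a) • T) - D * exp ((c - b) • T)) := by
  have hcont := continuous_exp_sub_smul T c
  simp only [← mul_assoc, integral_mul_exp_sub_smul_mul_mul, sub_zero]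
  rw [intervalIntegral.integral_sub intervalIntegrable_const
      (Continuous.intervalIntegrable (by fun_prop) _ _),
    intervalIntegral.integral_const, integral_mul_exp_sub_smul_mul]

theorem exp_smul_mul_exp_smul_of_commute {A B : 𝔸} (hAB : Commute A B) (t : ℝ) :
    exp (t • B) * exp (t • A) = exp (t • (A + B)) := by
  let : NormedAlgebra ℚ 𝔸 := .restrictScalars ℚ ℝ 𝔸
  rw [← exp_add_of_commute ((hAB.symm.smul_left t).smul_right t), smul_add, add_comm]

theorem intervalIntegral_const_mul_of_continuous (D : 𝔸) {f : ℝ → 𝔸} (hf : Continuous f)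
    (a b : ℝ) : ∫ x in a..b, D * f x = D * ∫ x in a..b, f x := by
  simpa using (ContinuousLinearMap.mul ℝ 𝔸 D).intervalIntegral_comp_comm (hf.intervalIntegrable a b)

theorem integral_exp_add_sub_exp_half_mul_integral_exp {A B : 𝔸} (hAB : Commute A B) (τ : ℝ) :
    -(∫ s in (0:ℝ)..τ, ∫ ξ in (0:ℝ)..s,
        (τ/2 - s) • (exp (τ • A) * (exp ((τ - ξ) • B) * (B * A))))
      - ∫ s in (0:ℝ)..τ, ∫ σ in s..(τ/2), ∫ ξ in (0:ℝ)..σ,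
          exp ((τ - s) • B) * (exp ((τ - ξ) • A) * (A * A)) =
    (∫ s in (0:ℝ)..τ, exp (s • (A + B))) - exp ((τ/2) • A) * ∫ s in (0:ℝ)..τ, exp (s • B) := by
  have hexpA := continuous_exp_sub_smul A τ
  have hexpB := continuous_exp_sub_smul B τ
  have hexpAB := continuous_exp_sub_smul (A + B) τ
  have hcomm (a b : ℝ) : Commute (exp (a • A)) (exp (b • B)) :=
    ((hAB.smul_left a).smul_right b).exp
  have hξ (s : ℝ) : ∫ ξ in (0:ℝ)..s, (τ/2 - s) • (exp (τ • A) * (exp ((τ - ξ) • B) * (B * A))) =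
      (τ/2 - s) • (exp (τ • A) * exp (τ • B) * A - exp (τ • A) * exp ((τ - s) • B) * A) := by
    simp only [intervalIntegral.integral_smul, ← mul_assoc, integral_mul_exp_sub_smul_mul_mul,
      sub_zero]
  have hsum (s : ℝ) :
      (τ/2 - s) • (exp (τ • A) * exp (τ • B) * A - exp (τ • A) * exp ((τ - s) • B) * A) +
        ((τ/2 - s) • (exp ((τ - s) • B) * exp (τ • A) * A) -
          (exp ((τ - s) • B) * exp ((τ - s) • A) - exp ((τ - s) • B) * exp ((τ/2) • A))) =
      (τ/2 - s) • (exp (τ • A) * exp (τ • B) * A) -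
        (exp ((τ - s) • (A + B)) - exp ((τ/2) • A) * exp ((τ - s) • B)) := by
    rw [(hcomm τ (τ - s)).eq, (hcomm (τ/2) (τ - s)).eq, exp_smul_mul_exp_smul_of_commute hAB]
    module
  have hmean : ∫ s in (0:ℝ)..τ, (τ/2 - s) = 0 := by
    rw [intervalIntegral.integral_sub intervalIntegrable_const intervalIntegrable_id, integral_id,
      intervalIntegral.integral_const, smul_eq_mul]
    ring
  simp only [hξ, integral_integral_mul_exp_sub_smul_mul_mul_self, sub_half]
  rw [← neg_add', ← intervalIntegral.integral_add (Continuous.intervalIntegrable (by fun_prop) _ _)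
    (Continuous.intervalIntegrable (by fun_prop) _ _)]
  simp only [hsum]
  rw [intervalIntegral.integral_sub (Continuous.intervalIntegrable (by fun_prop) _ _)
      (Continuous.intervalIntegrable (by fun_prop) _ _),
    intervalIntegral.integral_smul_const, hmean, zero_smul, zero_sub, neg_neg,
    intervalIntegral.integral_sub (Continuous.intervalIntegrable (by fun_prop) _ _)
      (Continuous.intervalIntegrable (by fun_prop) _ _),
    intervalIntegral_const_mul_of_continuous _ hexpB, integral_exp_sub_smul, integral_exp_sub_smul]

end

theorem integral_exp_smul_eq_smul_phi_one {X : Type*} [NormedAddCommGroup X] [NormedSpace ℝ X]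
    [CompleteSpace X] (T : X →L[ℝ] X) (τ : ℝ) :
    ∫ s in (0:ℝ)..τ, exp (s • T) = τ • phi 1 (τ • T) := by
  rw [← (hasSum_integral_exp_smul T τ).tsum_eq, phi, tsum_const_smul'']

theorem stmt5_general {X : Type*} [NormedAddCommGroup X] [NormedSpace ℝ X] [CompleteSpace X]
    (A B : X →L[ℝ] X) (hcomm : A.comp B = B.comp A) (τ : ℝ) :
    τ • phi 1 (τ • (A + B)) - τ • (NormedSpace.exp ((τ/2) • A)).comp (phi 1 (τ • B)) =
      -(∫ s in (0:ℝ)..τ, ∫ ξ in (0:ℝ)..s, (τ/2 - s) •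
          ((NormedSpace.exp (τ • A)).comp
            ((NormedSpace.exp ((τ - ξ) • B)).comp (B.comp A))))
      - ∫ s in (0:ℝ)..τ, ∫ σ in s..(τ/2), ∫ ξ in (0:ℝ)..σ,
          (NormedSpace.exp ((τ - s) • B)).comp
            ((NormedSpace.exp ((τ - ξ) • A)).comp (A.comp A)) := by
  simp only [← ContinuousLinearMap.mul_def]
  rw [integral_exp_add_sub_exp_half_mul_integral_exp (A := A) (B := B) hcomm,
    integral_exp_smul_eq_smul_phi_one, integral_exp_smul_eq_smul_phi_one, mul_smul_comm]

theorem stmt5 {X : Type*} [NormedAddCommGroup X] [NormedSpace ℝ X] [CompleteSpace X]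
    (A B : X →L[ℝ] X) (hcomm : A.comp B = B.comp A) (τ : ℝ) (hτ : 0 < τ) :
    τ • phi 1 (τ • (A + B)) - τ • (NormedSpace.exp ((τ/2) • A)).comp (phi 1 (τ • B)) =
      -(∫ s in (0:ℝ)..τ, ∫ ξ in (0:ℝ)..s, (τ/2 - s) •
          ((NormedSpace.exp (τ • A)).comp
            ((NormedSpace.exp ((τ - ξ) • B)).comp (B.comp A))))
      - ∫ s in (0:ℝ)..τ, ∫ σ in s..(τ/2), ∫ ξ in (0:ℝ)..σ,
          (NormedSpace.exp ((τ - s) • B)).comp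
            ((NormedSpace.exp ((τ - ξ) • A)).comp (A.comp A)) :=
  stmt5_general A B hcomm τ
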